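/- Let a₁, a₂ ≥ 0, z₁, z₂, α ∈ ℝ, and consider f(y) = (y − α)² + 𝟙_{C₁}(y)·(a₁·y + z₁)² + 𝟙_{C₂}(y)·(a₂·y − z₂)² on [0, ∞), where C₁ = {y ≥ 0 : z₁ ≤ 0 and −a₁·y ≥ z₁} and C₂ = {y ≥ 0 : z₂ > 0 and a₂·y ≤ z₂}, and 𝟙 denotes the 0/1 indicator. Then f is continuous on [0, ∞) and attains its minimum over [0, ∞) at some point of the finite set consisting of: 0; the truncations to [0,∞) of α, (α − a₁z₁)/(a₁² + 1), (α + a₂z₂)/(a₂² + 1), (α − a₁z₁ + a₂z₂)/(a₁² + a₂² + 1); and the truncations to [0,∞) of −z₁/a₁ and z₂/a₂ (when a₁ > 0, resp. a₂ > 0). -/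
import Mathlib

private lemma min_sq_subgrad (s t : ℝ) :
    (min s 0)^2 + 2*(min s 0)*(t - s) ≤ (min t 0)^2 := by
  rcases min_cases s 0 with ⟨h1, h2⟩ | ⟨h1, h2⟩ <;>
    rcases min_cases t 0 with ⟨h3, h4⟩ | ⟨h3, h4⟩ <;> rw [h1, h3] <;>
    nlinarith [sq_nonneg (t - s), sq_nonneg s, sq_nonneg t]

private lemma grad_ineq (a₁ a₂ z₁ z₂ α c y : ℝ) :
    ((c - α)^2 + (min (a₁*c + z₁) 0)^2 + (min (a₂*c - z₂) 0)^2)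
      + 2*((c - α) + a₁ * min (a₁*c + z₁) 0 + a₂ * min (a₂*c - z₂) 0)*(y - c)
    ≤ (y - α)^2 + (min (a₁*y + z₁) 0)^2 + (min (a₂*y - z₂) 0)^2 := by
  nlinarith [sq_nonneg (y - c), min_sq_subgrad (a₁*c + z₁) (a₁*y + z₁),
    min_sq_subgrad (a₂*c - z₂) (a₂*y - z₂)]

open Classical in
private lemma f_eq_F (a₁ a₂ z₁ z₂ α : ℝ) (ha₁ : 0 ≤ a₁) (ha₂ : 0 ≤ a₂) (y : ℝ) (hy : 0 ≤ y) :
    (y - α) ^ 2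
      + (if z₁ ≤ 0 ∧ z₁ ≤ -(a₁ * y) then (a₁ * y + z₁) ^ 2 else 0)
      + (if 0 < z₂ ∧ a₂ * y ≤ z₂ then (a₂ * y - z₂) ^ 2 else 0)
    = (y - α)^2 + (min (a₁*y + z₁) 0)^2 + (min (a₂*y - z₂) 0)^2 := by
  have hy1 : 0 ≤ a₁ * y := mul_nonneg ha₁ hy
  have hy2 : 0 ≤ a₂ * y := mul_nonneg ha₂ hy
  have e1 : (if z₁ ≤ 0 ∧ z₁ ≤ -(a₁ * y) then (a₁ * y + z₁) ^ 2 else 0)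
      = (min (a₁*y + z₁) 0)^2 := by
    split_ifs with h
    · rw [min_eq_left (by linarith [h.2])]
    · rcases le_or_gt (a₁ * y + z₁) 0 with h' | h'
      · exact absurd ⟨by linarith, by linarith⟩ h
      · rw [min_eq_right h'.le]; norm_num
  have e2 : (if 0 < z₂ ∧ a₂ * y ≤ z₂ then (a₂ * y - z₂) ^ 2 else 0)
      = (min (a₂*y - z₂) 0)^2 := by
    split_ifs with h
    · rw [min_eq_left (by linarith [h.2])]
    · rcases lt_or_ge (a₂ * y - z₂) 0 with h' | h'
      · exact absurd ⟨by linarith, by linarith⟩ h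
      · rw [min_eq_right h']; norm_num
  rw [e1, e2]

set_option maxHeartbeats 2000000 in
open Classical in
/-- The piecewise quadratic function arising in the explicit ρ-update is continuous on
`[0, ∞)` and attains its minimum there at one of finitely many explicit candidates. -/
theorem stmt_19 (a₁ a₂ z₁ z₂ α : ℝ) (ha₁ : 0 ≤ a₁) (ha₂ : 0 ≤ a₂) :
    ContinuousOn
      (fun y : ℝ => (y - α) ^ 2
        + (if z₁ ≤ 0 ∧ z₁ ≤ -(a₁ * y) then (a₁ * y + z₁) ^ 2 else 0)
        + (if 0 < z₂ ∧ a₂ * y ≤ z₂ then (a₂ * y - z₂) ^ 2 else 0))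
      (Set.Ici 0) ∧
    ∃ y ∈ ({0, max α 0, max ((α - a₁ * z₁) / (a₁ ^ 2 + 1)) 0,
            max ((α + a₂ * z₂) / (a₂ ^ 2 + 1)) 0,
            max ((α - a₁ * z₁ + a₂ * z₂) / (a₁ ^ 2 + a₂ ^ 2 + 1)) 0} : Set ℝ)
          ∪ {y : ℝ | 0 < a₁ ∧ y = max (-z₁ / a₁) 0}
          ∪ {y : ℝ | 0 < a₂ ∧ y = max (z₂ / a₂) 0},
      ∀ y' ∈ Set.Ici (0 : ℝ),
        ((y - α) ^ 2
          + (if z₁ ≤ 0 ∧ z₁ ≤ -(a₁ * y) then (a₁ * y + z₁) ^ 2 else 0)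
          + (if 0 < z₂ ∧ a₂ * y ≤ z₂ then (a₂ * y - z₂) ^ 2 else 0))
        ≤ ((y' - α) ^ 2
          + (if z₁ ≤ 0 ∧ z₁ ≤ -(a₁ * y') then (a₁ * y' + z₁) ^ 2 else 0)
          + (if 0 < z₂ ∧ a₂ * y' ≤ z₂ then (a₂ * y' - z₂) ^ 2 else 0)) := by
  have d1 : (0:ℝ) < a₁^2 + 1 := by positivity
  have d2 : (0:ℝ) < a₂^2 + 1 := by positivity
  have d3 : (0:ℝ) < a₁^2 + a₂^2 + 1 := by positivity
  set m1 : ℝ := (α - a₁ * z₁) / (a₁ ^ 2 + 1) with hm1d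
  set m2 : ℝ := (α + a₂ * z₂) / (a₂ ^ 2 + 1) with hm2d
  set m3 : ℝ := (α - a₁ * z₁ + a₂ * z₂) / (a₁ ^ 2 + a₂ ^ 2 + 1) with hm3d
  have hm1 : m1 * (a₁^2 + 1) = α - a₁ * z₁ := by
    rw [hm1d]; exact div_mul_cancel₀ _ (ne_of_gt d1)
  have hm2 : m2 * (a₂^2 + 1) = α + a₂ * z₂ := by
    rw [hm2d]; exact div_mul_cancel₀ _ (ne_of_gt d2)
  have hm3 : m3 * (a₁^2 + a₂^2 + 1) = α - a₁ * z₁ + a₂ * z₂ := by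
    rw [hm3d]; exact div_mul_cancel₀ _ (ne_of_gt d3)
  have hF : Continuous (fun y : ℝ =>
      (y - α)^2 + (min (a₁*y + z₁) 0)^2 + (min (a₂*y - z₂) 0)^2) := by
    apply Continuous.add
    apply Continuous.add
    · exact (continuous_id.sub continuous_const).pow 2
    · exact (((continuous_const.mul continuous_id).add continuous_const).min
        continuous_const).pow 2
    · exact (((continuous_const.mul continuous_id).sub continuous_const).min
        continuous_const).pow 2
  constructor
  · exact hF.continuousOn.congr fun y hy => f_eq_F a₁ a₂ z₁ z₂ α ha₁ ha₂ y hy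
  -- the key KKT lemma
  have key : ∀ c : ℝ, 0 ≤ c →
      0 ≤ (c - α) + a₁ * min (a₁*c + z₁) 0 + a₂ * min (a₂*c - z₂) 0 →
      ((c - α) + a₁ * min (a₁*c + z₁) 0 + a₂ * min (a₂*c - z₂) 0) * c = 0 →
      ∀ y' ∈ Set.Ici (0 : ℝ),
        ((c - α) ^ 2
          + (if z₁ ≤ 0 ∧ z₁ ≤ -(a₁ * c) then (a₁ * c + z₁) ^ 2 else 0)
          + (if 0 < z₂ ∧ a₂ * c ≤ z₂ then (a₂ * c - z₂) ^ 2 else 0))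
        ≤ ((y' - α) ^ 2
          + (if z₁ ≤ 0 ∧ z₁ ≤ -(a₁ * y') then (a₁ * y' + z₁) ^ 2 else 0)
          + (if 0 < z₂ ∧ a₂ * y' ≤ z₂ then (a₂ * y' - z₂) ^ 2 else 0)) := by
    intro c hc hg hgc y' hy'
    have hy'0 : (0:ℝ) ≤ y' := hy'
    rw [f_eq_F a₁ a₂ z₁ z₂ α ha₁ ha₂ c hc, f_eq_F a₁ a₂ z₁ z₂ α ha₁ ha₂ y' hy'0]
    have hgr := grad_ineq a₁ a₂ z₁ z₂ α c y'
    nlinarith [mul_nonneg hg hy'0]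
  have finish : ∀ v K : ℝ, 0 ≤ K →
      ((max v 0 - α) + a₁ * min (a₁ * max v 0 + z₁) 0 + a₂ * min (a₂ * max v 0 - z₂) 0
        = K * (max v 0 - v)) →
      ∀ y' ∈ Set.Ici (0 : ℝ),
        ((max v 0 - α) ^ 2
          + (if z₁ ≤ 0 ∧ z₁ ≤ -(a₁ * max v 0) then (a₁ * max v 0 + z₁) ^ 2 else 0)
          + (if 0 < z₂ ∧ a₂ * max v 0 ≤ z₂ then (a₂ * max v 0 - z₂) ^ 2 else 0))
        ≤ ((y' - α) ^ 2
          + (if z₁ ≤ 0 ∧ z₁ ≤ -(a₁ * y') then (a₁ * y' + z₁) ^ 2 else 0)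
          + (if 0 < z₂ ∧ a₂ * y' ≤ z₂ then (a₂ * y' - z₂) ^ 2 else 0)) := by
    intro v K hK hid
    apply key _ (le_max_right _ _)
    · rw [hid]
      exact mul_nonneg hK (by simp [sub_nonneg, le_max_left])
    · rw [hid]
      rcases max_cases v 0 with ⟨h1, _⟩ | ⟨h1, _⟩ <;> rw [h1] <;> ring
  by_cases hD2 : z₂ ≤ a₂ * max α 0
  · by_cases hD1 : 0 ≤ a₁ * max α 0 + z₁
    · -- case D
      refine ⟨max α 0, Set.mem_union_left _ (Set.mem_union_left _
        (Set.mem_insert_of_mem _ (Set.mem_insert _ _))), finish α 1 one_pos.le ?_⟩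
      rw [min_eq_right hD1, min_eq_right (by linarith : (0:ℝ) ≤ a₂ * max α 0 - z₂)]
      ring
    · -- case B via hD2
      push_neg at hD1
      have hα : a₁ * α ≤ a₁ * max α 0 := mul_le_mul_of_nonneg_left (le_max_left _ _) ha₁
      have hb1 : a₁ * max m1 0 + z₁ ≤ 0 := by
        rcases max_cases m1 0 with ⟨h1, h2⟩ | ⟨h1, h2⟩
        · rw [h1]
          by_contra hcon
          push_neg at hcon
          have hm1a : a₁ * m1 * (a₁^2 + 1) = a₁ * α - a₁^2 * z₁ := by
            linear_combination a₁ * hm1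
          nlinarith [mul_pos d1 hcon, hm1a, hα, hD1]
        · rw [h1]
          nlinarith [mul_nonneg ha₁ (le_max_right α 0)]
      have hb2 : 0 ≤ a₂ * max m1 0 - z₂ := by
        have h1 : 0 ≤ a₁ * (-z₁ - a₁ * α) := mul_nonneg ha₁ (by nlinarith)
        have hm1α : α ≤ m1 := by nlinarith [hm1, h1, d1]
        have h2 : a₂ * max α 0 ≤ a₂ * max m1 0 :=
          mul_le_mul_of_nonneg_left (max_le_max hm1α le_rfl) ha₂
        linarith
      refine ⟨max m1 0, Set.mem_union_left _ (Set.mem_union_left _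
        (Set.mem_insert_of_mem _ (Set.mem_insert_of_mem _ (Set.mem_insert _ _)))), finish m1 (a₁^2 + 1) d1.le ?_⟩
      rw [min_eq_left hb1, min_eq_right hb2]
      linear_combination hm1
  · push_neg at hD2
    have hα2 : a₂ * α ≤ a₂ * max α 0 := mul_le_mul_of_nonneg_left (le_max_left _ _) ha₂
    have hm2a : a₂ * m2 * (a₂^2 + 1) = a₂ * α + a₂^2 * z₂ := by
      linear_combination a₂ * hm2
    have hc2 : a₂ * max m2 0 - z₂ ≤ 0 := by
      rcases max_cases m2 0 with ⟨h1, h2⟩ | ⟨h1, h2⟩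
      · rw [h1]
        by_contra hcon
        push_neg at hcon
        nlinarith [mul_pos d2 (by linarith : 0 < a₂ * m2 - z₂), hm2a, hα2, hD2]
      · rw [h1]
        nlinarith [mul_nonneg ha₂ (le_max_right α 0)]
    by_cases hD1 : 0 ≤ a₁ * max α 0 + z₁
    · -- case C (via hD1)
      have hc1 : 0 ≤ a₁ * max m2 0 + z₁ := by
        have h1 : 0 ≤ a₂ * (z₂ - a₂ * α) := mul_nonneg ha₂ (by linarith)
        have hm2α : α ≤ m2 := by nlinarith [hm2, h1, d2]
        have h2 : a₁ * max α 0 ≤ a₁ * max m2 0 :=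
          mul_le_mul_of_nonneg_left (max_le_max hm2α le_rfl) ha₁
        linarith
      refine ⟨max m2 0, Set.mem_union_left _ (Set.mem_union_left _
        (Set.mem_insert_of_mem _ (Set.mem_insert_of_mem _ (Set.mem_insert_of_mem _ (Set.mem_insert _ _))))), finish m2 (a₂^2 + 1) d2.le ?_⟩
      rw [min_eq_right hc1, min_eq_left hc2]
      linear_combination hm2
    · push_neg at hD1
      have hα : a₁ * α ≤ a₁ * max α 0 := mul_le_mul_of_nonneg_left (le_max_left _ _) ha₁
      by_cases hC1 : 0 ≤ a₁ * max m2 0 + z₁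
      · -- case C (via hC1)
        refine ⟨max m2 0, Set.mem_union_left _ (Set.mem_union_left _
        (Set.mem_insert_of_mem _ (Set.mem_insert_of_mem _ (Set.mem_insert_of_mem _ (Set.mem_insert _ _))))), finish m2 (a₂^2 + 1) d2.le ?_⟩
        rw [min_eq_right hC1, min_eq_left hc2]
        linear_combination hm2
      · push_neg at hC1
        by_cases hB2 : z₂ ≤ a₂ * max m1 0
        · -- case B (via hD1 negation)
          have hb1 : a₁ * max m1 0 + z₁ ≤ 0 := by
            rcases max_cases m1 0 with ⟨h1, h2⟩ | ⟨h1, h2⟩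
            · rw [h1]
              by_contra hcon
              push_neg at hcon
              have hm1a : a₁ * m1 * (a₁^2 + 1) = a₁ * α - a₁^2 * z₁ := by
                linear_combination a₁ * hm1
              nlinarith [mul_pos d1 hcon, hm1a, hα, hD1]
            · rw [h1]
              nlinarith [mul_nonneg ha₁ (le_max_right α 0)]
          refine ⟨max m1 0, Set.mem_union_left _ (Set.mem_union_left _
        (Set.mem_insert_of_mem _ (Set.mem_insert_of_mem _ (Set.mem_insert _ _)))), finish m1 (a₁^2 + 1) d1.le ?_⟩
          rw [min_eq_left hb1, min_eq_right (by linarith : (0:ℝ) ≤ a₂ * max m1 0 - z₂)]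
          linear_combination hm1
        · -- case A
          push_neg at hB2
          have ha3 : a₁ * max m3 0 + z₁ ≤ 0 := by
            rcases max_cases m3 0 with ⟨h1, h2⟩ | ⟨h1, h2⟩
            · rw [h1]
              by_contra hcon
              push_neg at hcon
              have e3 : m3 * (a₁^2 + a₂^2 + 1) = (a₂^2 + 1) * m2 - a₁ * z₁ := by
                linear_combination hm3 - hm2
              have h4 : 0 ≤ a₁ * (a₁ * m3 + z₁) := mul_nonneg ha₁ hcon.le
              have h5 : m3 ≤ m2 := by nlinarith [e3, h4, d2]
              have h6 : a₁ * m3 ≤ a₁ * m2 := mul_le_mul_of_nonneg_left h5 ha₁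
              have h7 : a₁ * m2 ≤ a₁ * max m2 0 :=
                mul_le_mul_of_nonneg_left (le_max_left _ _) ha₁
              linarith
            · rw [h1]
              nlinarith [mul_nonneg ha₁ (le_max_right α 0)]
          have ha4 : a₂ * max m3 0 - z₂ ≤ 0 := by
            rcases max_cases m3 0 with ⟨h1, h2⟩ | ⟨h1, h2⟩
            · rw [h1]
              by_contra hcon
              push_neg at hcon
              have e4 : m3 * (a₁^2 + a₂^2 + 1) = (a₁^2 + 1) * m1 + a₂ * z₂ := by
                linear_combination hm3 - hm1
              have h4 : 0 ≤ a₂ * (a₂ * m3 - z₂) := mul_nonneg ha₂ (by linarith)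
              have h5 : m3 ≤ m1 := by nlinarith [e4, h4, d1]
              have h6 : a₂ * m3 ≤ a₂ * m1 := mul_le_mul_of_nonneg_left h5 ha₂
              have h7 : a₂ * m1 ≤ a₂ * max m1 0 :=
                mul_le_mul_of_nonneg_left (le_max_left _ _) ha₂
              linarith
            · rw [h1]
              nlinarith [mul_nonneg ha₂ (le_max_right α 0)]
          refine ⟨max m3 0, Set.mem_union_left _ (Set.mem_union_left _
        (Set.mem_insert_of_mem _ (Set.mem_insert_of_mem _ (Set.mem_insert_of_mem _ (Set.mem_insert_of_mem _ rfl))))), finish m3 (a₁^2 + a₂^2 + 1) d3.le ?_⟩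
          rw [min_eq_left ha3, min_eq_left ha4]
          linear_combination hm3
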